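/- arXiv:0810.1474 — 2 statements merged into one kernel-verified Lean document; each statement's English description precedes it below -/
import Mathlib

section
/- Let F : [α,β] → C^1([0,1],[0,1]) be a family of l-modal maps and let ι₀ be a finite itinerary that is realized by every f_γ: for each γ ∈ [α,β] there exists x(ι₀)(γ) ∈ [0,1] whose itinerary under f_γ equals ι₀. Then for each γ the point x(ι₀)(γ) is unique, and the map γ ↦ x(ι₀)(γ) is continuous on [α,β]. -/
open Set Metric

noncomputable section

/-- Endpoints of the laps of an `l`-modal map with turning points `c`. -/
def lapPts (l : ℕ) (c : Fin l → ℝ) (i : Fin (l + 2)) : ℝ :=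
  if h0 : (i : ℕ) = 0 then 0
  else if hl : (i : ℕ) = l + 1 then 1
  else c ⟨(i : ℕ) - 1, by have := i.isLt; omega⟩

/-- The `i`-th (closed) lap of an `l`-modal map with turning points `c`. -/
def lap (l : ℕ) (c : Fin l → ℝ) (i : Fin (l + 1)) : Set ℝ :=
  Icc (lapPts l c i.castSucc) (lapPts l c i.succ)

/-- The `j`-th lap as in the paper: `I_1 = [0,c_1)`, `I_j = (c_{j-1},c_j)` and
`I_{l+1} = (c_l,1]`. -/
def openLap (l : ℕ) (c : Fin l → ℝ) (j : Fin (l + 1)) : Set ℝ :=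
  Ioo (lapPts l c j.castSucc) (lapPts l c j.succ)
    ∪ (if (j : ℕ) = 0 then {0} else (∅ : Set ℝ))
    ∪ (if (j : ℕ) = l then {1} else (∅ : Set ℝ))

/-- `f` is an `l`-modal map of `[0,1]` with turning points `c 0 < … < c (l-1)`. -/
def IsLModal (l : ℕ) (f : ℝ → ℝ) (c : Fin l → ℝ) : Prop :=
  StrictMono c ∧ (∀ i, c i ∈ Ioo (0:ℝ) 1) ∧
  MapsTo f (Icc 0 1) (Icc 0 1) ∧
  f 0 ∈ ({0, 1} : Set ℝ) ∧ f 1 ∈ ({0, 1} : Set ℝ) ∧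
  ∃ s : Fin (l + 1) → Bool,
    (∀ i : Fin l, s i.castSucc ≠ s i.succ) ∧
    (∀ i, if s i then StrictMonoOn f (lap l c i) else StrictAntiOn f (lap l c i))

/-- `f` is a `C¹` `l`-modal map with turning points `c`. -/
def IsC1LModal (l : ℕ) (f : ℝ → ℝ) (c : Fin l → ℝ) : Prop :=
  IsLModal l f c ∧ ContDiff ℝ 1 f ∧
  ∀ x ∈ Icc (0:ℝ) 1, (∀ i, x ≠ c i) → deriv f x ≠ 0

/-- Continuity of the family `γ ↦ F γ` on `[a,b]` with respect to the `C¹` topology. -/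
def C1FamilyOn (F : ℝ → ℝ → ℝ) (a b : ℝ) : Prop :=
  ∀ γ₀ ∈ Icc a b, ∀ ε > (0:ℝ), ∃ δ > (0:ℝ), ∀ γ ∈ Icc a b, |γ - γ₀| < δ →
    ∀ x ∈ Icc (0:ℝ) 1, |F γ x - F γ₀ x| < ε ∧ |deriv (F γ) x - deriv (F γ₀) x| < ε

/-- The point `x` realizes, under `f` with turning points `c`, the finite itinerary
consisting of the lap symbols `S 0, …, S (n-1)` followed by the terminal critical symbol
`c j`. -/
def RealizesItin (l : ℕ) (f : ℝ → ℝ) (c : Fin l → ℝ)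
    (n : ℕ) (S : Fin n → Fin (l + 1)) (j : Fin l) (x : ℝ) : Prop :=
  (∀ k : Fin n, f^[(k : ℕ)] x ∈ openLap l c (S k)) ∧ f^[n] x = c j


/-!
Each map is injective on every closed lap, so two points that follow the same laps and have the
same `n`-th iterate coincide: peel off one iterate at a time. This gives uniqueness, even among
points following the itinerary through closed laps.

For continuity, the realizing points lie in the compact `[0,1]`, so it suffices that every cluster
point `x` of `x(γ)` as `γ → γ₀` equals `x(γ₀)`. Iterates pass to the limit by uniform convergence
of `f_γ → f_{γ₀}`, and so do the turning points, which move continuously thanks to `C¹`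
convergence. Hence `x` follows the itinerary through the closed laps of `f_{γ₀}` and hits
`c_j(γ₀)`, and the strong form of uniqueness applies.
-/

open Filter Topology

section Laps

variable {l : ℕ} {c : Fin l → ℝ}

@[simp]
theorem lapPts_succ_castSucc (k : Fin l) : lapPts l c k.succ.castSucc = c k := by
  have hk := k.isLt
  simp only [lapPts, Fin.val_castSucc, Fin.val_succ, Nat.add_sub_cancel]
  rw [dif_neg (by omega), dif_neg (by omega)]

theorem strictMono_lapPts (hc : StrictMono c) (h01 : ∀ i, c i ∈ Ioo (0:ℝ) 1) :
    StrictMono (lapPts l c) := by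
  intro v w hvw
  have hw := w.isLt
  have hlt : (v : ℕ) < w := hvw
  unfold lapPts
  split_ifs
  all_goals first
    | omega | exact one_pos | exact (h01 _).1 | exact (h01 _).2
    | exact hc (Fin.mk_lt_mk.2 (by omega))

theorem lapPts_mem_Icc (h01 : ∀ i, c i ∈ Ioo (0:ℝ) 1) (v : Fin (l + 2)) :
    lapPts l c v ∈ Icc (0:ℝ) 1 := by
  unfold lapPts
  split_ifs
  exacts [left_mem_Icc.2 zero_le_one, right_mem_Icc.2 zero_le_one, Ioo_subset_Icc_self (h01 _)]

theorem continuous_lapPts (v : Fin (l + 2)) : Continuous fun c : Fin l → ℝ => lapPts l c v := by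
  unfold lapPts
  split_ifs
  exacts [continuous_const, continuous_const, continuous_apply _]

theorem lap_subset_Icc (h01 : ∀ i, c i ∈ Ioo (0:ℝ) 1) (i : Fin (l + 1)) :
    lap l c i ⊆ Icc 0 1 :=
  Icc_subset_Icc (lapPts_mem_Icc h01 _).1 (lapPts_mem_Icc h01 _).2

theorem openLap_subset_lap (h01 : ∀ i, c i ∈ Ioo (0:ℝ) 1) (i : Fin (l + 1)) :
    openLap l c i ⊆ lap l c i := by
  rintro x ((hx | hx) | hx)
  · exact Ioo_subset_Icc_self hx
  · split_ifs at hx with h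
    · obtain rfl : x = 0 := hx
      refine ⟨le_of_eq ?_, (lapPts_mem_Icc h01 _).1⟩
      simp [lapPts, h]
    · exact hx.elim
  · split_ifs at hx with h
    · obtain rfl : x = 1 := hx
      refine ⟨(lapPts_mem_Icc h01 _).2, le_of_eq ?_⟩
      simp [lapPts, h]
    · exact hx.elim

theorem lapPts_notMem_Ioo (hc : StrictMono (lapPts l c)) (v : Fin (l + 2)) (i : Fin (l + 1)) :
    lapPts l c v ∉ Ioo (lapPts l c i.castSucc) (lapPts l c i.succ) := by
  rintro ⟨hlo, hhi⟩
  have h₁ : (i : ℕ) < v := hc.lt_iff_lt.1 hlo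
  have h₂ : (v : ℕ) < i + 1 := hc.lt_iff_lt.1 hhi
  omega

end Laps

theorem eq_of_iterate_eq_of_injOn {α : Type*} {f : α → α} :
    ∀ {n : ℕ} {A : Fin n → Set α} {x y : α}, (∀ k, InjOn f (A k)) →
      (∀ k : Fin n, f^[k] x ∈ A k) → (∀ k : Fin n, f^[k] y ∈ A k) → f^[n] x = f^[n] y → x = y
  | 0, _, _, _, _, _, _, h => h
  | _ + 1, _, _, _, hA, hx, hy, h =>
    hA 0 (hx 0) (hy 0) <|
      eq_of_iterate_eq_of_injOn (fun k => hA k.succ) (fun k => hx k.succ) (fun k => hy k.succ) h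

theorem TendstoUniformlyOn.tendsto_iterate_comp {ι α : Type*} [UniformSpace α] {L : Filter ι}
    {G : ι → α → α} {f : α → α} {s : Set α} (hG : TendstoUniformlyOn G f L s)
    (hf : Continuous f) {xs : ι → α} {x : α} (hx : Tendsto xs L (𝓝 x)) :
    ∀ {k : ℕ}, (∀ᶠ t in L, ∀ m < k, (G t)^[m] (xs t) ∈ s) →
      Tendsto (fun t => (G t)^[k] (xs t)) L (𝓝 (f^[k] x))
  | 0, _ => hx
  | k + 1, hs => by
    simp only [Function.iterate_succ_apply']
    refine hG.tendsto_comp hf.continuousWithinAt (tendsto_nhdsWithin_iff.2 ⟨?_, ?_⟩)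
    · exact hG.tendsto_iterate_comp hf hx (hs.mono fun t h m hm => h m (hm.trans k.lt_succ_self))
    · exact hs.mono fun t h => h k k.lt_succ_self

theorem exists_mem_Ioo_eq_zero_of_mul_neg {g : ℝ → ℝ} {u v : ℝ} (huv : u ≤ v)
    (hg : ContinuousOn g (Icc u v)) (h : g u * g v < 0) : ∃ x ∈ Ioo u v, g x = 0 := by
  rcases mul_neg_iff.1 h with ⟨hu, hv⟩ | ⟨hu, hv⟩
  exacts [intermediate_value_Ioo' huv hg ⟨hv, hu⟩, intermediate_value_Ioo huv hg ⟨hu, hv⟩]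

theorem forall_mem_Ioo_of_exists_mem_Ioo {l : ℕ} {c c₀ : Fin l → ℝ} {ε : ℝ} (hc : StrictMono c)
    (hsep : ∀ i k, i < k → c₀ i + ε ≤ c₀ k - ε)
    (h : ∀ i, ∃ k, c k ∈ Ioo (c₀ i - ε) (c₀ i + ε)) (i : Fin l) :
    c i ∈ Ioo (c₀ i - ε) (c₀ i + ε) := by
  choose k hk using h
  have hk_mono : StrictMono k := fun i i' hii' =>
    hc.lt_iff_lt.1 <| ((hk i).2.trans_le (hsep i i' hii')).trans (hk i').1
  simpa [hk_mono.apply_eq] using hk i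

namespace IsLModal

variable {l n : ℕ} {f : ℝ → ℝ} {c : Fin l → ℝ} {S : Fin n → Fin (l + 1)} {j : Fin l}

theorem injOn_lap (hf : IsLModal l f c) (i : Fin (l + 1)) : InjOn f (lap l c i) := by
  obtain ⟨-, -, -, -, -, s, -, hdir⟩ := hf
  have := hdir i
  split_ifs at this
  exacts [this.injOn, this.injOn]

theorem iterate_mem_lap_of_realizesItin (hf : IsLModal l f c) {x : ℝ}
    (hx : RealizesItin l f c n S j x) (k : Fin n) : f^[k] x ∈ lap l c (S k) :=
  openLap_subset_lap hf.2.1 _ (hx.1 k)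

theorem iterate_mem_Icc_of_realizesItin (hf : IsLModal l f c) {x : ℝ}
    (hx : RealizesItin l f c n S j x) {m : ℕ} (hm : m < n) : f^[m] x ∈ Icc 0 1 :=
  lap_subset_Icc hf.2.1 _ (hf.iterate_mem_lap_of_realizesItin hx ⟨m, hm⟩)

theorem eq_of_realizesItin (hf : IsLModal l f c) {x y : ℝ} (hx : RealizesItin l f c n S j x)
    (hy : ∀ k : Fin n, f^[k] y ∈ lap l c (S k)) (hyj : f^[n] y = c j) : y = x :=
  eq_of_iterate_eq_of_injOn (fun k => hf.injOn_lap (S k)) hy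
    (hf.iterate_mem_lap_of_realizesItin hx) (hyj.trans hx.2.symm)

end IsLModal

theorem mem_lap_of_tendsto_realizesItin {ι : Type*} {L : Filter ι} [L.NeBot] {l n : ℕ}
    {S : Fin n → Fin (l + 1)} {j : Fin l} {G : ι → ℝ → ℝ} {cs : ι → Fin l → ℝ} {xs : ι → ℝ}
    {f : ℝ → ℝ} {c : Fin l → ℝ} {x : ℝ} (hG : TendstoUniformlyOn G f L (Icc 0 1))
    (hf : Continuous f) (hc : Tendsto cs L (𝓝 c)) (hx : Tendsto xs L (𝓝 x))
    (hmodal : ∀ᶠ t in L, IsLModal l (G t) (cs t))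
    (hreal : ∀ᶠ t in L, RealizesItin l (G t) (cs t) n S j (xs t)) :
    (∀ k : Fin n, f^[k] x ∈ lap l c (S k)) ∧ f^[n] x = c j := by
  have horbit : ∀ k ≤ n, Tendsto (fun t => (G t)^[k] (xs t)) L (𝓝 (f^[k] x)) := fun k hk =>
    hG.tendsto_iterate_comp hf hx <| (hmodal.and hreal).mono fun t h m hm =>
      h.1.iterate_mem_Icc_of_realizesItin h.2 (hm.trans_le hk)
  have hlapPts (v : Fin (l + 2)) : Tendsto (fun t => lapPts l (cs t) v) L (𝓝 (lapPts l c v)) :=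
    ((continuous_lapPts v).tendsto c).comp hc
  refine ⟨fun k => ?_, ?_⟩
  · have hlap : ∀ᶠ t in L, (G t)^[k] (xs t) ∈ lap l (cs t) (S k) :=
      (hmodal.and hreal).mono fun t h => h.1.iterate_mem_lap_of_realizesItin h.2 k
    exact ⟨le_of_tendsto_of_tendsto (hlapPts _) (horbit k k.isLt.le) (hlap.mono fun _ h => h.1),
      le_of_tendsto_of_tendsto (horbit k k.isLt.le) (hlapPts _) (hlap.mono fun _ h => h.2)⟩
  · exact tendsto_nhds_unique ((horbit n le_rfl).congr' (hreal.mono fun t h => h.2))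
      (((continuous_apply j).tendsto c).comp hc)

theorem deriv_pos_of_strictMonoOn_Icc {f : ℝ → ℝ} {u v x : ℝ} (hf : StrictMonoOn f (Icc u v))
    (hx : x ∈ Ioo u v) (h0 : deriv f x ≠ 0) : 0 < deriv f x := by
  have := hf.monotoneOn.derivWithin_nonneg (x := x)
  rw [derivWithin_of_mem_nhds (Icc_mem_nhds hx.1 hx.2)] at this
  exact this.lt_of_ne' h0

theorem deriv_neg_of_strictAntiOn_Icc {f : ℝ → ℝ} {u v x : ℝ} (hf : StrictAntiOn f (Icc u v))
    (hx : x ∈ Ioo u v) (h0 : deriv f x ≠ 0) : deriv f x < 0 := by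
  have := hf.antitoneOn.derivWithin_nonpos (x := x)
  rw [derivWithin_of_mem_nhds (Icc_mem_nhds hx.1 hx.2)] at this
  exact this.lt_of_ne h0

namespace IsC1LModal

variable {l : ℕ} {f : ℝ → ℝ} {c : Fin l → ℝ}

theorem exists_eq_of_deriv_eq_zero (hf : IsC1LModal l f c) {x : ℝ} (hx : x ∈ Icc 0 1)
    (h0 : deriv f x = 0) : ∃ k, c k = x := by
  by_contra! h
  exact hf.2.2 x hx (fun k => (h k).symm) h0

theorem deriv_ne_zero_of_mem_Ioo (hf : IsC1LModal l f c) {i : Fin (l + 1)} {x : ℝ}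
    (hx : x ∈ Ioo (lapPts l c i.castSucc) (lapPts l c i.succ)) : deriv f x ≠ 0 := by
  have hmono := strictMono_lapPts hf.1.1 hf.1.2.1
  refine hf.2.2 x (lap_subset_Icc hf.1.2.1 i (Ioo_subset_Icc_self hx)) fun k hk => ?_
  rw [hk, ← lapPts_succ_castSucc (c := c)] at hx
  exact lapPts_notMem_Ioo hmono _ i hx

/-- Adjacent laps have opposite monotonicity directions. -/
theorem deriv_mul_deriv_neg (hf : IsC1LModal l f c) (k : Fin l) {x y : ℝ}
    (hx : x ∈ Ioo (lapPts l c k.castSucc.castSucc) (c k))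
    (hy : y ∈ Ioo (c k) (lapPts l c k.succ.succ)) : deriv f x * deriv f y < 0 := by
  obtain ⟨s, halt, hdir⟩ := hf.1.2.2.2.2.2
  rw [← lapPts_succ_castSucc (c := c), ← Fin.succ_castSucc] at hx
  rw [← lapPts_succ_castSucc (c := c)] at hy
  have hx0 := hf.deriv_ne_zero_of_mem_Ioo hx
  have hy0 := hf.deriv_ne_zero_of_mem_Ioo hy
  have hne := halt k
  have hleft := hdir k.castSucc
  have hright := hdir k.succ
  cases hs : s k.castSucc <;> cases hs' : s k.succ <;>
    simp only [hs, hs', ne_eq, not_true_eq_false, Bool.false_eq_true, if_true, if_false]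
      at hne hleft hright
  · exact mul_neg_of_neg_of_pos (deriv_neg_of_strictAntiOn_Icc hleft hx hx0)
      (deriv_pos_of_strictMonoOn_Icc hright hy hy0)
  · exact mul_neg_of_pos_of_neg (deriv_pos_of_strictMonoOn_Icc hleft hx hx0)
      (deriv_neg_of_strictAntiOn_Icc hright hy hy0)

end IsC1LModal

theorem eventually_two_mul_lt_lapPts_sub {l : ℕ} {c : Fin l → ℝ} (hc : StrictMono (lapPts l c)) :
    ∀ᶠ ε in 𝓝[>] (0:ℝ), ∀ v : Fin (l + 1), 2 * ε < lapPts l c v.succ - lapPts l c v.castSucc :=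
  eventually_all.2 fun v => eventually_nhdsWithin_of_eventually_nhds <|
    (eventually_lt_nhds (half_pos (sub_pos.2 (hc v.castSucc_lt_succ)))).mono fun _ h => by linarith

theorem eventually_exists_turningPoint_mem_Ioo {ι : Type*} {L : Filter ι} {l : ℕ}
    {G : ι → ℝ → ℝ} {cs : ι → Fin l → ℝ} {f : ℝ → ℝ} {u v : ℝ}
    (hG : TendstoUniformlyOn (fun t => deriv (G t)) (deriv f) L (Icc 0 1))
    (hmodal : ∀ᶠ t in L, IsC1LModal l (G t) (cs t)) (huv : u ≤ v) (h01 : Icc u v ⊆ Icc 0 1)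
    (hf : deriv f u * deriv f v < 0) : ∀ᶠ t in L, ∃ k, cs t k ∈ Ioo u v := by
  have hu := hG.tendsto_at (h01 (left_mem_Icc.2 huv))
  have hv := hG.tendsto_at (h01 (right_mem_Icc.2 huv))
  filter_upwards [hmodal, (hu.mul hv).eventually (eventually_lt_nhds hf)] with t ht hneg
  obtain ⟨x, hx, hx0⟩ :=
    exists_mem_Ioo_eq_zero_of_mul_neg huv (ht.2.1.continuous_deriv le_rfl).continuousOn hneg
  obtain ⟨k, rfl⟩ := ht.exists_eq_of_deriv_eq_zero (h01 (Ioo_subset_Icc_self hx)) hx0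
  exact ⟨k, hx⟩

namespace C1FamilyOn

variable {l n : ℕ} {F : ℝ → ℝ → ℝ} {c : ℝ → Fin l → ℝ} {a b γ₀ : ℝ}

theorem eventually_abs_sub_lt (hfam : C1FamilyOn F a b) (hγ₀ : γ₀ ∈ Icc a b) {ε : ℝ}
    (hε : 0 < ε) : ∀ᶠ γ in 𝓝[Icc a b] γ₀, ∀ x ∈ Icc (0:ℝ) 1,
      |F γ x - F γ₀ x| < ε ∧ |deriv (F γ) x - deriv (F γ₀) x| < ε := by
  obtain ⟨δ, hδ, h⟩ := hfam γ₀ hγ₀ ε hε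
  filter_upwards [self_mem_nhdsWithin, mem_nhdsWithin_of_mem_nhds (ball_mem_nhds γ₀ hδ)]
    with γ hγ hγδ
  exact h γ hγ hγδ

theorem tendstoUniformlyOn (hfam : C1FamilyOn F a b) (hγ₀ : γ₀ ∈ Icc a b) :
    TendstoUniformlyOn F (F γ₀) (𝓝[Icc a b] γ₀) (Icc 0 1) :=
  Metric.tendstoUniformlyOn_iff.2 fun _ hε => (hfam.eventually_abs_sub_lt hγ₀ hε).mono
    fun _ h x hx => by rw [dist_comm]; exact (h x hx).1

theorem tendstoUniformlyOn_deriv (hfam : C1FamilyOn F a b) (hγ₀ : γ₀ ∈ Icc a b) :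
    TendstoUniformlyOn (fun γ => deriv (F γ)) (deriv (F γ₀)) (𝓝[Icc a b] γ₀) (Icc 0 1) :=
  Metric.tendstoUniformlyOn_iff.2 fun _ hε => (hfam.eventually_abs_sub_lt hγ₀ hε).mono
    fun _ h x hx => by rw [dist_comm]; exact (h x hx).2

/-- For small `ε`, the derivative of `F γ₀` has opposite signs at `c γ₀ i ± ε`; this persists for
`γ` near `γ₀`, so `F γ` has a turning point in each interval `(c γ₀ i - ε, c γ₀ i + ε)`. These
`l` disjoint intervals are ordered, so the `i`-th one contains the `i`-th turning point. -/
theorem tendsto_turningPoints (hfam : C1FamilyOn F a b)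
    (hmodal : ∀ γ ∈ Icc a b, IsC1LModal l (F γ) (c γ)) (hγ₀ : γ₀ ∈ Icc a b) :
    Tendsto c (𝓝[Icc a b] γ₀) (𝓝 (c γ₀)) := by
  have hf₀ := hmodal γ₀ hγ₀
  have hmono := strictMono_lapPts hf₀.1.1 hf₀.1.2.1
  suffices h : ∀ᶠ ε in 𝓝[>] (0:ℝ), ∀ᶠ γ in 𝓝[Icc a b] γ₀, ∀ i,
      c γ i ∈ Ioo (c γ₀ i - ε) (c γ₀ i + ε) by
    refine tendsto_pi_nhds.2 fun i => Metric.tendsto_nhds.2 fun ε₀ hε₀ => ?_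
    obtain ⟨ε, hε, hεε₀⟩ := (h.and (Ioo_mem_nhdsGT hε₀)).exists
    refine hε.mono fun γ hγ => ?_
    rw [Real.dist_eq, abs_sub_lt_iff]
    constructor <;> linarith [(hγ i).1, (hγ i).2, hεε₀.2]
  filter_upwards [self_mem_nhdsWithin, eventually_two_mul_lt_lapPts_sub hmono]
    with ε (hε : 0 < ε) hgap
  have hleft (i : Fin l) : c γ₀ i - ε ∈ Ioo (lapPts l (c γ₀) i.castSucc.castSucc) (c γ₀ i) := by
    have := hgap i.castSucc
    rw [Fin.succ_castSucc, lapPts_succ_castSucc] at this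
    constructor <;> linarith
  have hright (i : Fin l) : c γ₀ i + ε ∈ Ioo (c γ₀ i) (lapPts l (c γ₀) i.succ.succ) := by
    have := hgap i.succ
    rw [lapPts_succ_castSucc] at this
    constructor <;> linarith
  have hsep (i k : Fin l) (hik : i < k) : c γ₀ i + ε ≤ c γ₀ k - ε := by
    have hle : lapPts l (c γ₀) i.succ.succ ≤ lapPts l (c γ₀) k.succ.castSucc :=
      hmono.monotone (Fin.le_def.2 (by simpa [Nat.succ_le_iff] using hik))
    have := hgap i.succ
    rw [lapPts_succ_castSucc] at this hle
    linarith
  have hnear (i : Fin l) : ∀ᶠ γ in 𝓝[Icc a b] γ₀, ∃ k, c γ k ∈ Ioo (c γ₀ i - ε) (c γ₀ i + ε) :=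
    eventually_exists_turningPoint_mem_Ioo (hfam.tendstoUniformlyOn_deriv hγ₀)
      (eventually_nhdsWithin_of_forall hmodal) (by linarith)
      (Icc_subset_Icc ((lapPts_mem_Icc hf₀.1.2.1 _).1.trans (hleft i).1.le)
        ((hright i).2.le.trans (lapPts_mem_Icc hf₀.1.2.1 _).2))
      (hf₀.deriv_mul_deriv_neg i (hleft i) (hright i))
  filter_upwards [eventually_all.2 hnear, self_mem_nhdsWithin] with γ hγ hγab
  exact forall_mem_Ioo_of_exists_mem_Ioo (hmodal γ hγab).1.1 hsep hγ

theorem continuousOn_of_realizesItin (hfam : C1FamilyOn F a b)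
    (hmodal : ∀ γ ∈ Icc a b, IsC1LModal l (F γ) (c γ)) {S : Fin n → Fin (l + 1)} {j : Fin l}
    {xf : ℝ → ℝ} (hxf : ∀ γ ∈ Icc a b, xf γ ∈ Icc 0 1 ∧ RealizesItin l (F γ) (c γ) n S j (xf γ)) :
    ContinuousOn xf (Icc a b) := by
  intro γ₀ hγ₀
  refine isCompact_Icc.tendsto_nhds_of_unique_mapClusterPt
    (eventually_nhdsWithin_of_forall fun γ hγ => (hxf γ hγ).1) fun x _ hx => ?_
  obtain ⟨U, hU, hxU⟩ := mapClusterPt_iff_ultrafilter.1 hx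
  have hU_realizes : ∀ᶠ γ in U, IsLModal l (F γ) (c γ) ∧ RealizesItin l (F γ) (c γ) n S j (xf γ) :=
    hU (eventually_nhdsWithin_of_forall fun γ hγ => ⟨(hmodal γ hγ).1, (hxf γ hγ).2⟩)
  obtain ⟨hlap, hend⟩ := mem_lap_of_tendsto_realizesItin
    (fun u hu => hU (hfam.tendstoUniformlyOn hγ₀ u hu)) (hmodal γ₀ hγ₀).2.1.continuous
    ((hfam.tendsto_turningPoints hmodal hγ₀).mono_left hU) hxU
    (hU_realizes.mono fun _ h => h.1) (hU_realizes.mono fun _ h => h.2)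
  exact (hmodal γ₀ hγ₀).1.eq_of_realizesItin (hxf γ₀ hγ₀).2 hlap hend

end C1FamilyOn

/-- If a finite itinerary is realized by every map of a `C¹`-continuous family of `l`-modal
maps, then the realizing point is unique and depends continuously on the parameter. -/
theorem finite_itinerary_point_unique_continuous
    (l n : ℕ) (F : ℝ → ℝ → ℝ) (c : ℝ → Fin l → ℝ) (a b : ℝ)
    (S : Fin n → Fin (l + 1)) (j : Fin l)
    (hfam : C1FamilyOn F a b)
    (hmodal : ∀ γ ∈ Icc a b, IsC1LModal l (F γ) (c γ))
    (hreal : ∀ γ ∈ Icc a b, ∃ x ∈ Icc (0:ℝ) 1, RealizesItin l (F γ) (c γ) n S j x) :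
    (∀ γ ∈ Icc a b, ∀ x₁ x₂ : ℝ,
      RealizesItin l (F γ) (c γ) n S j x₁ → RealizesItin l (F γ) (c γ) n S j x₂ →
        x₁ = x₂) ∧
    ∃ xf : ℝ → ℝ, ContinuousOn xf (Icc a b) ∧
      ∀ γ ∈ Icc a b, RealizesItin l (F γ) (c γ) n S j (xf γ) := by
  refine ⟨fun γ hγ x₁ x₂ h₁ h₂ => (hmodal γ hγ).1.eq_of_realizesItin h₂
    ((hmodal γ hγ).1.iterate_mem_lap_of_realizesItin h₁) h₁.2, ?_⟩
  have hchoice (γ : ℝ) : ∃ x, γ ∈ Icc a b → x ∈ Icc 0 1 ∧ RealizesItin l (F γ) (c γ) n S j x := by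
    by_cases hγ : γ ∈ Icc a b
    · obtain ⟨x, hx⟩ := hreal γ hγ
      exact ⟨x, fun _ => hx⟩
    · exact ⟨0, fun h => absurd h hγ⟩
  choose xf hxf using hchoice
  exact ⟨xf, hfam.continuousOn_of_realizesItin hmodal hxf, fun γ hγ => (hxf γ hγ).2⟩
end
end

section
/- Let F : [α,β] → C^1([0,1],[0,1]) be a natural family of l-modal maps and fix j ∈ {1,…,l}. Then for every γ ∈ (α,β] the left asymptotic kneading sequence K_j^−(γ) exists, and for every γ ∈ [α,β) the right asymptotic kneading sequence K_j^+(γ) exists: for every n ≥ 0 there are δ > 0 and a word S_n ∈ A_I^n such that for all θ ∈ (0,δ) the first n symbols of K_j(γ−θ) (respectively K_j(γ+θ)) are lap symbols forming exactly the word S_n. Moreover: if γ ∈ (α,β) and K_j(γ) is infinite (all its symbols lap symbols), then K_j^−(γ) = K_j(γ) = K_j^+(γ); and if K_j(γ) = S c_i for some word S ∈ A_I^n and some i ∈ {1,…,l}, then K_j^−(γ) = S l_1 l_2 ⋯ and K_j^+(γ) = S r_1 r_2 ⋯ with l_1, r_1 ∈ {I_i, I_{i+1}}. -/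
open Set Metric

noncomputable section

/-- Symbols: lap symbols `I_1, …, I_{l+1}` (`Sum.inl`) and critical symbols `c_1, …, c_l`
(`Sum.inr`). -/
def MSym (l : ℕ) := Fin (l + 1) ⊕ Fin l

/-- The symbol of the point `x` relative to the turning points `c`. -/
def symAt (l : ℕ) (c : Fin l → ℝ) (x : ℝ) : MSym l :=
  letI := Classical.propDecidable (∃ j, x = c j)
  if h : ∃ j, x = c j then Sum.inr h.choose
  else Sum.inl ⟨(Finset.univ.filter fun i => c i < x).card,
    Nat.lt_succ_of_le (le_trans (Finset.card_filter_le _ _) (by simp))⟩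

/-- The `m`-th symbol of the `j`-th kneading sequence `K_j(γ) = ι(f_γ(c_j))`. -/
def kneadSym (l : ℕ) (F : ℝ → ℝ → ℝ) (c : ℝ → Fin l → ℝ) (γ : ℝ) (j : Fin l)
    (m : ℕ) : MSym l :=
  symAt l (c γ) ((F γ)^[m] (F γ (c γ (j))))

/-- The family is natural: each finite itinerary is attained as a kneading sequence for
only finitely many parameters. -/
def NaturalFamily (l : ℕ) (F : ℝ → ℝ → ℝ) (c : ℝ → Fin l → ℝ) (a b : ℝ) : Prop :=
  ∀ j : Fin l, ∀ n : ℕ, ∀ S : Fin n → Fin (l + 1), ∀ i : Fin l,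
    {γ | γ ∈ Icc a b ∧ (∀ k : Fin n, kneadSym l F c γ j k = Sum.inl (S k)) ∧
      kneadSym l F c γ j n = Sum.inr i}.Finite

/-- `Km` is the left asymptotic kneading sequence `K_j^-(γ)`: for every `n` there is
`δ > 0` such that for `0 < θ < δ` the first `n` symbols of `K_j(γ - θ)` are lap symbols
forming the word `Km 0 ⋯ Km (n-1)`. -/
def LeftAsym (l : ℕ) (F : ℝ → ℝ → ℝ) (c : ℝ → Fin l → ℝ) (a b : ℝ)
    (j : Fin l) (γ : ℝ) (Km : ℕ → Fin (l + 1)) : Prop :=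
  ∀ n : ℕ, ∃ δ > (0:ℝ), ∀ θ : ℝ, 0 < θ → θ < δ →
    γ - θ ∈ Icc a b ∧ ∀ m < n, kneadSym l F c (γ - θ) j m = Sum.inl (Km m)

/-- `Kp` is the right asymptotic kneading sequence `K_j^+(γ)`. -/
def RightAsym (l : ℕ) (F : ℝ → ℝ → ℝ) (c : ℝ → Fin l → ℝ) (a b : ℝ)
    (j : Fin l) (γ : ℝ) (Kp : ℕ → Fin (l + 1)) : Prop :=
  ∀ n : ℕ, ∃ δ > (0:ℝ), ∀ θ : ℝ, 0 < θ → θ < δ →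
    γ + θ ∈ Icc a b ∧ ∀ m < n, kneadSym l F c (γ + θ) j m = Sum.inl (Kp m)

/-!
Turning points and the orbit of each critical value depend continuously on the parameter (a
strict extremum survives a `C⁰`-small perturbation, and an interior extremum of `f_γ` is a
turning point). Hence the `m`-th kneading symbol is locally constant near a parameter where it
is a lap symbol, and near a parameter where it is `c_i` it can only be `I_i` or `I_{i+1}`.
By naturality only finitely many parameters have a critical symbol among the first `m + 1`, so
on a short one-sided interval the `m`-th symbol is a lap symbol throughout, and it is constant
there by connectedness.
-/

open Filter Topology
open scoped Finset

section Laps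

variable {l : ℕ} {c : Fin l → ℝ}

lemma lapPts_castSucc_succ (i : Fin l) : lapPts l c i.castSucc.succ = c i := by
  simp [lapPts, i.isLt.ne]

lemma lapPts_castSucc_castSucc_lt (hc : StrictMono c) (h01 : ∀ i, c i ∈ Ioo (0:ℝ) 1)
    (i : Fin l) : lapPts l c i.castSucc.castSucc < c i := by
  unfold lapPts
  split_ifs with h0 hl
  · exact (h01 i).1
  · simp only [Fin.val_castSucc] at hl; omega
  · exact hc (Fin.lt_def.2 (by simp only [Fin.val_castSucc] at h0 ⊢; omega))

lemma lt_lapPts_succ_succ (hc : StrictMono c) (h01 : ∀ i, c i ∈ Ioo (0:ℝ) 1)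
    (i : Fin l) : c i < lapPts l c i.succ.succ := by
  unfold lapPts
  split_ifs with h0 hl
  · simp at h0
  · exact (h01 i).2
  · exact hc (Fin.lt_def.2 (by simp))

lemma lap_castSucc (i : Fin l) :
    lap l c i.castSucc = Icc (lapPts l c i.castSucc.castSucc) (c i) := by
  rw [lap, lapPts_castSucc_succ]

lemma lap_succ (i : Fin l) : lap l c i.succ = Icc (c i) (lapPts l c i.succ.succ) := by
  rw [lap, ← Fin.succ_castSucc, lapPts_castSucc_succ]

end Laps

def IsPeakOrPit (g : ℝ → ℝ) (p x q : ℝ) : Prop :=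
  (g p < g x ∧ g q < g x) ∨ (g x < g p ∧ g x < g q)

lemma IsPeakOrPit.exists_isLocalExtr {g : ℝ → ℝ} {p x q : ℝ} (h : IsPeakOrPit g p x q)
    (hx : x ∈ Icc p q) (hg : ContinuousOn g (Icc p q)) : ∃ z ∈ Ioo p q, IsLocalExtr g z := by
  have hIoo {z : ℝ} (hz : z ∈ Icc p q) (hp : z ≠ p) (hq : z ≠ q) : z ∈ Ioo p q :=
    ⟨lt_of_le_of_ne hz.1 hp.symm, lt_of_le_of_ne hz.2 hq⟩
  rcases h with ⟨hp, hq⟩ | ⟨hp, hq⟩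
  · obtain ⟨z, hz, hmax⟩ := isCompact_Icc.exists_isMaxOn ⟨x, hx⟩ hg
    have hz' := hIoo hz (by rintro rfl; exact (hmax hx).not_gt hp)
      (by rintro rfl; exact (hmax hx).not_gt hq)
    exact ⟨z, hz', (hmax.isLocalMax (Icc_mem_nhds hz'.1 hz'.2)).isExtr⟩
  · obtain ⟨z, hz, hmin⟩ := isCompact_Icc.exists_isMinOn ⟨x, hx⟩ hg
    have hz' := hIoo hz (by rintro rfl; exact (hmin hx).not_gt hp)
      (by rintro rfl; exact (hmin hx).not_gt hq)
    exact ⟨z, hz', (hmin.isLocalMin (Icc_mem_nhds hz'.1 hz'.2)).isExtr⟩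

lemma IsPeakOrPit.eventually {α : Type*} {L : Filter α} {G : α → ℝ → ℝ} {g : ℝ → ℝ}
    {p x q : ℝ} (h : IsPeakOrPit g p x q) (hp : Tendsto (G · p) L (𝓝 (g p)))
    (hx : Tendsto (G · x) L (𝓝 (g x))) (hq : Tendsto (G · q) L (𝓝 (g q))) :
    ∀ᶠ t in L, IsPeakOrPit (G t) p x q := by
  rcases h with ⟨h1, h2⟩ | ⟨h1, h2⟩
  · filter_upwards [hp.eventually_lt hx h1, hq.eventually_lt hx h2] with t h1 h2
    exact Or.inl ⟨h1, h2⟩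
  · filter_upwards [hx.eventually_lt hp h1, hx.eventually_lt hq h2] with t h1 h2
    exact Or.inr ⟨h1, h2⟩

section LModal

variable {l : ℕ} {f : ℝ → ℝ} {c : Fin l → ℝ}

lemma IsLModal.eventually_isPeakOrPit (hf : IsLModal l f c) (i : Fin l) :
    ∀ᶠ η in 𝓝[>] 0, IsPeakOrPit f (c i - η) (c i) (c i + η) := by
  obtain ⟨hc, h01, -, -, -, s, hs, hmono⟩ := hf
  have hlo := lapPts_castSucc_castSucc_lt hc h01 i
  have hhi := lt_lapPts_succ_succ hc h01 i
  filter_upwards [Ioo_mem_nhdsGT (lt_min (sub_pos.2 hlo) (sub_pos.2 hhi))] with η ⟨hη, hηlt⟩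
  have hη₁ := hηlt.trans_le (min_le_left _ _)
  have hη₂ := hηlt.trans_le (min_le_right _ _)
  have hleft : c i - η ∈ lap l c i.castSucc := by rw [lap_castSucc]; constructor <;> linarith
  have hright : c i + η ∈ lap l c i.succ := by rw [lap_succ]; constructor <;> linarith
  have hci_left : c i ∈ lap l c i.castSucc := by rw [lap_castSucc]; exact right_mem_Icc.2 hlo.le
  have hci_right : c i ∈ lap l c i.succ := by rw [lap_succ]; exact left_mem_Icc.2 hhi.le
  have hl := hmono i.castSucc
  have hr := hmono i.succ
  have halt := hs i
  cases hsl : s i.castSucc <;> cases hsr : s i.succ <;> simp only [hsl, hsr] at halt hl hr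
  · exact absurd rfl halt
  · exact Or.inr ⟨hl hleft hci_left (by linarith), hr hci_right hright (by linarith)⟩
  · exact Or.inl ⟨hl hleft hci_left (by linarith), hr hci_right hright (by linarith)⟩
  · exact absurd rfl halt

lemma IsLModal.exists_turningPoint_windows (hf : IsLModal l f c) {ε : ℝ} (hε : 0 < ε) :
    ∃ η ∈ Ioo 0 ε, (∀ k, 0 ≤ c k - η ∧ c k + η ≤ 1 ∧ IsPeakOrPit f (c k - η) (c k) (c k + η)) ∧
      ∀ k k', k < k' → c k + η ≤ c k' - η := by
  have h01 := hf.2.1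
  have hwindow : ∀ k, ∀ᶠ η in 𝓝[>] (0:ℝ),
      0 ≤ c k - η ∧ c k + η ≤ 1 ∧ IsPeakOrPit f (c k - η) (c k) (c k + η) := fun k => by
    filter_upwards [nhdsWithin_le_nhds (eventually_lt_nhds (h01 k).1),
      nhdsWithin_le_nhds (eventually_lt_nhds (sub_pos.2 (h01 k).2)),
      hf.eventually_isPeakOrPit k] with η h0 h1 hpp
    exact ⟨by linarith, by linarith, hpp⟩
  have hdisj : ∀ k k', ∀ᶠ η in 𝓝[>] (0:ℝ), k < k' → c k + η ≤ c k' - η := fun k k' => by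
    by_cases hkk' : k < k'
    · filter_upwards [nhdsWithin_le_nhds
        (eventually_lt_nhds (half_pos (sub_pos.2 (hf.1 hkk'))))] with η hη _
      linarith
    · exact Eventually.of_forall fun _ h => absurd h hkk'
  have hsmall : ∀ᶠ η in 𝓝[>] (0:ℝ), η ∈ Ioo 0 ε := Ioo_mem_nhdsGT hε
  exact (hsmall.and ((eventually_all.2 hwindow).and
    (eventually_all.2 fun k => eventually_all.2 (hdisj k)))).exists

end LModal

lemma StrictMono.mem_Ioo_of_forall_exists_mem_Ioo {n : ℕ} {c p q : Fin n → ℝ}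
    (hc : StrictMono c) (hsep : ∀ k k', k < k' → q k ≤ p k')
    (h : ∀ k, ∃ k', c k' ∈ Ioo (p k) (q k)) (i : Fin n) : c i ∈ Ioo (p i) (q i) := by
  choose σ hσ using h
  have hσ_mono : StrictMono σ := fun k k' hkk' =>
    hc.lt_iff_lt.1 (((hσ k).2.trans_le (hsep k k' hkk')).trans (hσ k').1)
  simpa only [hσ_mono.apply_eq] using hσ i

lemma IsC1LModal.exists_mem_Ioo_of_isPeakOrPit {l : ℕ} {f : ℝ → ℝ} {c : Fin l → ℝ}
    (hf : IsC1LModal l f c) {p x q : ℝ} (hp : 0 ≤ p) (hq : q ≤ 1) (hx : x ∈ Icc p q)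
    (h : IsPeakOrPit f p x q) : ∃ k, c k ∈ Ioo p q := by
  obtain ⟨z, hz, hextr⟩ := h.exists_isLocalExtr hx hf.2.1.continuous.continuousOn
  by_contra! hno
  exact hf.2.2 z ⟨hp.trans hz.1.le, hz.2.le.trans hq⟩ (fun k hk => hno k (hk ▸ hz))
    hextr.deriv_eq_zero

section Family

variable {l : ℕ} {F : ℝ → ℝ → ℝ} {c : ℝ → Fin l → ℝ} {a b γ₀ : ℝ}

lemma C1FamilyOn.eventually_abs_sub_lt_s9 (hfam : C1FamilyOn F a b) (hγ₀ : γ₀ ∈ Icc a b)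
    {ε : ℝ} (hε : 0 < ε) :
    ∀ᶠ γ in 𝓝[Icc a b] γ₀, ∀ x ∈ Icc (0:ℝ) 1, |F γ x - F γ₀ x| < ε := by
  obtain ⟨δ, hδ, hclose⟩ := hfam γ₀ hγ₀ ε hε
  filter_upwards [self_mem_nhdsWithin, mem_nhdsWithin_of_mem_nhds (Metric.ball_mem_nhds γ₀ hδ)]
    with γ hγ hball x hx
  exact (hclose γ hγ hball x hx).1

lemma C1FamilyOn.tendsto_apply (hfam : C1FamilyOn F a b) (hγ₀ : γ₀ ∈ Icc a b) {x : ℝ}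
    (hx : x ∈ Icc (0:ℝ) 1) : Tendsto (F · x) (𝓝[Icc a b] γ₀) (𝓝 (F γ₀ x)) :=
  Metric.tendsto_nhds.2 fun _ hε =>
    (hfam.eventually_abs_sub_lt_s9 hγ₀ hε).mono fun _ h => h x hx

lemma C1FamilyOn.tendsto_comp (hfam : C1FamilyOn F a b) (hγ₀ : γ₀ ∈ Icc a b) {g : ℝ → ℝ}
    (hF : ContinuousAt (F γ₀) (g γ₀)) (hg : Tendsto g (𝓝[Icc a b] γ₀) (𝓝 (g γ₀)))
    (hg01 : ∀ᶠ γ in 𝓝[Icc a b] γ₀, g γ ∈ Icc (0:ℝ) 1) :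
    Tendsto (fun γ => F γ (g γ)) (𝓝[Icc a b] γ₀) (𝓝 (F γ₀ (g γ₀))) := by
  refine Metric.tendsto_nhds.2 fun ε hε => ?_
  filter_upwards [hfam.eventually_abs_sub_lt_s9 hγ₀ (half_pos hε), hg01,
    Metric.tendsto_nhds.1 (hF.tendsto.comp hg) _ (half_pos hε)] with γ hFγ hgγ hFg
  calc dist (F γ (g γ)) (F γ₀ (g γ₀))
      ≤ dist (F γ (g γ)) (F γ₀ (g γ)) + dist (F γ₀ (g γ)) (F γ₀ (g γ₀)) := dist_triangle _ _ _
    _ < ε / 2 + ε / 2 := add_lt_add (hFγ _ hgγ) hFg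
    _ = ε := add_halves ε

theorem tendsto_turningPoint (hfam : C1FamilyOn F a b)
    (hmodal : ∀ γ ∈ Icc a b, IsC1LModal l (F γ) (c γ)) (hγ₀ : γ₀ ∈ Icc a b) (i : Fin l) :
    Tendsto (fun γ => c γ i) (𝓝[Icc a b] γ₀) (𝓝 (c γ₀ i)) := by
  refine Metric.tendsto_nhds.2 fun ε hε => ?_
  obtain ⟨η, ⟨hη0, hηε⟩, hη, hsep⟩ := (hmodal γ₀ hγ₀).1.exists_turningPoint_windows hε
  have hpersist : ∀ᶠ γ in 𝓝[Icc a b] γ₀, γ ∈ Icc a b ∧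
      ∀ k, IsPeakOrPit (F γ) (c γ₀ k - η) (c γ₀ k) (c γ₀ k + η) := by
    refine Eventually.and self_mem_nhdsWithin (eventually_all.2 fun k => ?_)
    obtain ⟨hp, hq, hpp⟩ := hη k
    have hx := (hmodal γ₀ hγ₀).1.2.1 k
    exact hpp.eventually (hfam.tendsto_apply hγ₀ ⟨hp, by linarith⟩)
      (hfam.tendsto_apply hγ₀ ⟨hx.1.le, hx.2.le⟩) (hfam.tendsto_apply hγ₀ ⟨by linarith, hq⟩)
  filter_upwards [hpersist] with γ ⟨hγ, hpp⟩
  have hi := (hmodal γ hγ).1.1.mem_Ioo_of_forall_exists_mem_Ioo hsep (fun k =>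
    (hmodal γ hγ).exists_mem_Ioo_of_isPeakOrPit (hη k).1 (hη k).2.1
      ⟨by linarith, by linarith⟩ (hpp k)) i
  rw [Real.dist_eq, abs_lt]
  constructor <;> linarith [hi.1, hi.2]

end Family

def critOrbit {l : ℕ} (F : ℝ → ℝ → ℝ) (c : ℝ → Fin l → ℝ) (j : Fin l) (γ : ℝ) (m : ℕ) : ℝ :=
  (F γ)^[m] (F γ (c γ j))

section Orbit

variable {l : ℕ} {F : ℝ → ℝ → ℝ} {c : ℝ → Fin l → ℝ} {a b γ₀ : ℝ}

lemma critOrbit_mem_Icc (hmodal : ∀ γ ∈ Icc a b, IsC1LModal l (F γ) (c γ)) {γ : ℝ}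
    (hγ : γ ∈ Icc a b) (j : Fin l) (m : ℕ) : critOrbit F c j γ m ∈ Icc (0:ℝ) 1 := by
  obtain ⟨⟨-, h01, hmaps, -⟩, -⟩ := hmodal γ hγ
  induction m with
  | zero => exact hmaps ⟨(h01 j).1.le, (h01 j).2.le⟩
  | succ m ih =>
    rw [critOrbit, Function.iterate_succ_apply']
    exact hmaps ih

lemma tendsto_critOrbit (hfam : C1FamilyOn F a b)
    (hmodal : ∀ γ ∈ Icc a b, IsC1LModal l (F γ) (c γ)) (hγ₀ : γ₀ ∈ Icc a b) (j : Fin l)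
    (m : ℕ) :
    Tendsto (fun γ => critOrbit F c j γ m) (𝓝[Icc a b] γ₀) (𝓝 (critOrbit F c j γ₀ m)) := by
  have hcont := (hmodal γ₀ hγ₀).2.1.continuous
  induction m with
  | zero =>
    refine hfam.tendsto_comp hγ₀ hcont.continuousAt
      (tendsto_turningPoint hfam hmodal hγ₀ j) ?_
    filter_upwards [self_mem_nhdsWithin] with γ hγ
    exact Ioo_subset_Icc_self ((hmodal γ hγ).1.2.1 j)
  | succ m ih =>
    simp only [critOrbit, Function.iterate_succ_apply']
    refine hfam.tendsto_comp hγ₀ hcont.continuousAt ih ?_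
    filter_upwards [self_mem_nhdsWithin] with γ hγ
    exact critOrbit_mem_Icc hmodal hγ j m

end Orbit

section Symbols

variable {l : ℕ} {c : Fin l → ℝ} {x : ℝ}

lemma symAt_eq_inl_iff {t : Fin (l + 1)} :
    symAt l c x = Sum.inl t ↔ (∀ k, x ≠ c k) ∧ (t : ℕ) = #{k | c k < x} := by
  by_cases hx : ∃ k, x = c k
  · rw [show symAt l c x = _ from dif_pos hx]
    obtain ⟨k, hk⟩ := hx
    simp only [reduceCtorEq, false_iff, not_and]
    exact fun h => absurd hk (h k)
  · rw [show symAt l c x = _ from dif_neg hx]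
    push Not at hx
    exact ⟨fun h => ⟨hx, by rw [← Sum.inl_injective h]⟩,
      fun h => congrArg Sum.inl (Fin.ext h.2.symm)⟩

lemma eq_of_symAt_eq_inr {i : Fin l} (h : symAt l c x = Sum.inr i) : x = c i := by
  by_cases hx : ∃ k, x = c k
  · rw [show symAt l c x = _ from dif_pos hx] at h
    exact Sum.inr_injective h ▸ hx.choose_spec
  · rw [show symAt l c x = _ from dif_neg hx] at h
    exact absurd h Sum.inl_ne_inr

lemma card_filter_lt_of_adjacent {i : Fin l} (hlt : ∀ k < i, c k < x)
    (hgt : ∀ k, i < k → x < c k) (hne : x ≠ c i) :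
    #{k | c k < x} = i ∨ #{k | c k < x} = i + 1 := by
  rcases hne.lt_or_gt with hxi | hix
  · left
    have : ({k | c k < x} : Finset (Fin l)) = Finset.Iio i := by
      ext k
      simp only [Finset.mem_filter, Finset.mem_univ, true_and, Finset.mem_Iio]
      rcases lt_trichotomy k i with hki | rfl | hik
      · simp [hki, hlt k hki]
      · simp [hxi.not_gt]
      · simp [hik.not_gt, (hgt k hik).not_gt]
    rw [this, Fin.card_Iio]
  · right
    have : ({k | c k < x} : Finset (Fin l)) = Finset.Iic i := by
      ext k
      simp only [Finset.mem_filter, Finset.mem_univ, true_and, Finset.mem_Iic]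
      rcases lt_trichotomy k i with hki | rfl | hik
      · simp [hki.le, hlt k hki]
      · simp [hix]
      · simp [hik.not_ge, (hgt k hik).not_gt]
    rw [this, Fin.card_Iic]

variable {α : Type*} {L : Filter α} {c' : α → Fin l → ℝ} {x' : α → ℝ}

lemma eventually_symAt_eq (hc : ∀ k, Tendsto (c' · k) L (𝓝 (c k))) (hx : Tendsto x' L (𝓝 x))
    {t : Fin (l + 1)} (h : symAt l c x = Sum.inl t) :
    ∀ᶠ s in L, symAt l (c' s) (x' s) = Sum.inl t := by
  obtain ⟨hne, hcard⟩ := symAt_eq_inl_iff.1 h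
  have hside : ∀ k, ∀ᶠ s in L, x' s ≠ c' s k ∧ (c' s k < x' s ↔ c k < x) := fun k => by
    rcases (hne k).lt_or_gt with hlt | hgt
    · filter_upwards [hx.eventually_lt (hc k) hlt] with s hs
      exact ⟨hs.ne, by simp [hs.not_gt, hlt.not_gt]⟩
    · filter_upwards [(hc k).eventually_lt hx hgt] with s hs
      exact ⟨hs.ne', by simp [hs, hgt]⟩
  filter_upwards [eventually_all.2 hside] with s hs
  refine symAt_eq_inl_iff.2 ⟨fun k => (hs k).1, hcard.trans ?_⟩
  exact congrArg Finset.card (Finset.filter_congr fun k _ => (hs k).2.symm)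

lemma eventually_symAt_adjacent (hc : ∀ k, Tendsto (c' · k) L (𝓝 (c k)))
    (hx : Tendsto x' L (𝓝 x)) (hmono : StrictMono c) {i : Fin l} (hxi : x = c i) :
    ∀ᶠ s in L, ∀ t, symAt l (c' s) (x' s) = Sum.inl t → t = i.castSucc ∨ t = i.succ := by
  have hside : ∀ k, ∀ᶠ s in L, (k < i → c' s k < x' s) ∧ (i < k → x' s < c' s k) := fun k => by
    rcases lt_trichotomy k i with hki | rfl | hik
    · filter_upwards [(hc k).eventually_lt hx (hxi ▸ hmono hki)] with s hs
      exact ⟨fun _ => hs, fun h => absurd hki h.not_gt⟩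
    · exact Eventually.of_forall fun _ => by simp
    · filter_upwards [hx.eventually_lt (hc k) (hxi ▸ hmono hik)] with s hs
      exact ⟨fun h => absurd hik h.not_gt, fun _ => hs⟩
  filter_upwards [eventually_all.2 hside] with s hs t ht
  obtain ⟨hne, hcard⟩ := symAt_eq_inl_iff.1 ht
  rcases card_filter_lt_of_adjacent (fun k hk => (hs k).1 hk) (fun k hk => (hs k).2 hk) (hne i)
    with h | h
  · exact Or.inl (Fin.ext (hcard.trans h))
  · exact Or.inr (Fin.ext (hcard.trans h))

end Symbols

lemma IsPreconnected.apply_eq_of_eventually_eq {α β : Type*} [TopologicalSpace α] {s : Set α}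
    (hs : IsPreconnected s) {f : α → β} (hf : ∀ x ∈ s, ∀ᶠ y in 𝓝[s] x, f y = f x) {x y : α}
    (hx : x ∈ s) (hy : y ∈ s) : f x = f y := by
  let : TopologicalSpace β := ⊥
  have : DiscreteTopology β := ⟨rfl⟩
  refine hs.constant (fun z hz => ?_) hx hy
  rw [ContinuousWithinAt, nhds_discrete, tendsto_pure]
  exact hf z hz

section Kneading

variable {l : ℕ} {F : ℝ → ℝ → ℝ} {c : ℝ → Fin l → ℝ} {a b γ₀ : ℝ} {j : Fin l} {m : ℕ}

lemma eventually_kneadSym_eq (hfam : C1FamilyOn F a b)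
    (hmodal : ∀ γ ∈ Icc a b, IsC1LModal l (F γ) (c γ)) (hγ₀ : γ₀ ∈ Icc a b) {t : Fin (l + 1)}
    (h : kneadSym l F c γ₀ j m = Sum.inl t) :
    ∀ᶠ γ in 𝓝[Icc a b] γ₀, kneadSym l F c γ j m = Sum.inl t :=
  eventually_symAt_eq (tendsto_turningPoint hfam hmodal hγ₀)
    (tendsto_critOrbit hfam hmodal hγ₀ j m) h

lemma eventually_kneadSym_adjacent (hfam : C1FamilyOn F a b)
    (hmodal : ∀ γ ∈ Icc a b, IsC1LModal l (F γ) (c γ)) (hγ₀ : γ₀ ∈ Icc a b) {i : Fin l}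
    (h : kneadSym l F c γ₀ j m = Sum.inr i) :
    ∀ᶠ γ in 𝓝[Icc a b] γ₀, ∀ t, kneadSym l F c γ j m = Sum.inl t → t = i.castSucc ∨ t = i.succ :=
  eventually_symAt_adjacent (tendsto_turningPoint hfam hmodal hγ₀)
    (tendsto_critOrbit hfam hmodal hγ₀ j m) (hmodal γ₀ hγ₀).1.1 (eq_of_symAt_eq_inr h)

lemma NaturalFamily.finite_setOf_crit (hnat : NaturalFamily l F c a b) (j : Fin l) (n : ℕ) :
    {γ | γ ∈ Icc a b ∧ ∃ m < n, ∃ i, kneadSym l F c γ j m = Sum.inr i}.Finite := by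
  induction n with
  | zero => simp
  | succ n ih =>
    refine (ih.union (finite_iUnion fun S => finite_iUnion fun i => hnat j n S i)).subset ?_
    rintro γ ⟨hγ, m, hm, i, hi⟩
    by_cases hearly : ∃ m < n, ∃ i, kneadSym l F c γ j m = Sum.inr i
    · exact Or.inl ⟨hγ, hearly⟩
    · push Not at hearly
      obtain rfl : m = n := by by_contra hne; exact hearly m (by omega) i hi
      have hlap : ∀ k : Fin m, ∃ t, kneadSym l F c γ j k = Sum.inl t := fun k => by
        rcases hk : kneadSym l F c γ j k with t | i'
        · exact ⟨t, rfl⟩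
        · exact absurd hk (hearly k k.isLt i')
      choose S hS using hlap
      exact Or.inr (mem_iUnion₂.2 ⟨S, i, hγ, hS, hi⟩)

/-- For `L = 𝓝[<] γ` (resp. `𝓝[>] γ`) this says `K = K_j^-(γ)` (resp. `K_j^+(γ)`). -/
def IsAsymKnead (l : ℕ) (F : ℝ → ℝ → ℝ) (c : ℝ → Fin l → ℝ) (j : Fin l) (L : Filter ℝ)
    (K : ℕ → Fin (l + 1)) : Prop :=
  ∀ m, ∀ᶠ γ in L, kneadSym l F c γ j m = Sum.inl (K m)

theorem exists_isAsymKnead (hfam : C1FamilyOn F a b)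
    (hmodal : ∀ γ ∈ Icc a b, IsC1LModal l (F γ) (c γ)) (hnat : NaturalFamily l F c a b)
    (j : Fin l) {L : Filter ℝ} [L.NeBot] (hL : L ≤ 𝓝[Icc a b \ {γ₀}] γ₀)
    (hconn : ∀ u ∈ L, ∃ s ∈ L, s ⊆ u ∧ IsPreconnected s) :
    ∃ K, IsAsymKnead l F c j L K := by
  suffices ∀ m, ∃ t, ∀ᶠ γ in L, kneadSym l F c γ j m = Sum.inl t by
    choose K hK using this
    exact ⟨K, hK⟩
  intro m
  set B := {γ | γ ∈ Icc a b ∧ ∃ m' < m + 1, ∃ i, kneadSym l F c γ j m' = Sum.inr i}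
  have hgood : ∀ᶠ γ in L, γ ∈ Icc a b ∧ γ ∉ B := by
    refine hL ?_
    filter_upwards [self_mem_nhdsWithin, mem_nhdsWithin_of_mem_nhds
      (((hnat.finite_setOf_crit j (m + 1)).sdiff (t := {γ₀})).isClosed.isOpen_compl.mem_nhds
        fun h => h.2 rfl)] with γ hγ hB
    exact ⟨hγ.1, fun h => hB ⟨h, hγ.2⟩⟩
  obtain ⟨s, hsL, hsub, hs⟩ := hconn _ hgood
  have hlap : ∀ γ ∈ s, ∃ t, kneadSym l F c γ j m = Sum.inl t := fun γ hγ => by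
    rcases hk : kneadSym l F c γ j m with t | i
    · exact ⟨t, rfl⟩
    · exact absurd ⟨(hsub hγ).1, m, m.lt_succ_self, i, hk⟩ (hsub hγ).2
  obtain ⟨γ₁, hγ₁⟩ := L.nonempty_of_mem hsL
  obtain ⟨t, ht⟩ := hlap γ₁ hγ₁
  refine ⟨t, mem_of_superset hsL fun γ hγ => ?_⟩
  refine (hs.apply_eq_of_eventually_eq (f := (kneadSym l F c · j m)) (fun γ' hγ' => ?_)
    hγ hγ₁).trans ht
  obtain ⟨t', ht'⟩ := hlap γ' hγ'
  exact ((eventually_kneadSym_eq hfam hmodal (hsub hγ').1 ht').filter_mono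
    (nhdsWithin_mono _ fun γ hγ => (hsub hγ).1)).mono fun _ h => h.trans ht'.symm

end Kneading

section Asymptotic

variable {l : ℕ} {F : ℝ → ℝ → ℝ} {c : ℝ → Fin l → ℝ} {a b γ₀ : ℝ} {j : Fin l}
  {L : Filter ℝ} {K : ℕ → Fin (l + 1)} {m : ℕ}

lemma IsAsymKnead.eq_of_kneadSym_eq_inl (hK : IsAsymKnead l F c j L K) [L.NeBot]
    (hfam : C1FamilyOn F a b) (hmodal : ∀ γ ∈ Icc a b, IsC1LModal l (F γ) (c γ))
    (hγ₀ : γ₀ ∈ Icc a b) (hL : L ≤ 𝓝[Icc a b] γ₀) {t : Fin (l + 1)}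
    (h : kneadSym l F c γ₀ j m = Sum.inl t) : K m = t := by
  obtain ⟨γ, h1, h2⟩ := ((hK m).and (hL (eventually_kneadSym_eq hfam hmodal hγ₀ h))).exists
  exact Sum.inl_injective (h1.symm.trans h2)

lemma IsAsymKnead.adjacent_of_kneadSym_eq_inr (hK : IsAsymKnead l F c j L K) [L.NeBot]
    (hfam : C1FamilyOn F a b) (hmodal : ∀ γ ∈ Icc a b, IsC1LModal l (F γ) (c γ))
    (hγ₀ : γ₀ ∈ Icc a b) (hL : L ≤ 𝓝[Icc a b] γ₀) {i : Fin l}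
    (h : kneadSym l F c γ₀ j m = Sum.inr i) : K m = i.castSucc ∨ K m = i.succ := by
  obtain ⟨γ, h1, h2⟩ := ((hK m).and (hL (eventually_kneadSym_adjacent hfam hmodal hγ₀ h))).exists
  exact h2 _ h1

lemma nhdsLT_le_nhdsWithin_Icc_diff (hγ₀ : γ₀ ∈ Ioc a b) : 𝓝[<] γ₀ ≤ 𝓝[Icc a b \ {γ₀}] γ₀ :=
  nhdsWithin_le_iff.2 <| mem_of_superset (Ioo_mem_nhdsLT hγ₀.1) fun _ hγ =>
    ⟨⟨hγ.1.le, hγ.2.le.trans hγ₀.2⟩, hγ.2.ne⟩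

lemma nhdsGT_le_nhdsWithin_Icc_diff (hγ₀ : γ₀ ∈ Ico a b) : 𝓝[>] γ₀ ≤ 𝓝[Icc a b \ {γ₀}] γ₀ :=
  nhdsWithin_le_iff.2 <| mem_of_superset (Ioo_mem_nhdsGT hγ₀.2) fun _ hγ =>
    ⟨⟨hγ₀.1.trans hγ.1.le, hγ.2.le⟩, hγ.1.ne'⟩

lemma leftAsym_of_isAsymKnead (hK : IsAsymKnead l F c j (𝓝[<] γ₀) K)
    (hab : ∀ᶠ γ in 𝓝[<] γ₀, γ ∈ Icc a b) : LeftAsym l F c a b j γ₀ K := by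
  intro n
  obtain ⟨u, hu, hsub⟩ := mem_nhdsLT_iff_exists_Ioo_subset.1
    (hab.and ((eventually_all_finite (finite_Iio n)).2 fun m _ => hK m))
  exact ⟨γ₀ - u, sub_pos.2 hu, fun θ hθ hθu => hsub ⟨by linarith, by linarith⟩⟩

lemma rightAsym_of_isAsymKnead (hK : IsAsymKnead l F c j (𝓝[>] γ₀) K)
    (hab : ∀ᶠ γ in 𝓝[>] γ₀, γ ∈ Icc a b) : RightAsym l F c a b j γ₀ K := by
  intro n
  obtain ⟨u, hu, hsub⟩ := mem_nhdsGT_iff_exists_Ioo_subset.1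
    (hab.and ((eventually_all_finite (finite_Iio n)).2 fun m _ => hK m))
  exact ⟨u - γ₀, sub_pos.2 hu, fun θ hθ hθu => hsub ⟨by linarith, by linarith⟩⟩

theorem exists_leftAsym (hfam : C1FamilyOn F a b)
    (hmodal : ∀ γ ∈ Icc a b, IsC1LModal l (F γ) (c γ)) (hnat : NaturalFamily l F c a b)
    (j : Fin l) (hγ₀ : γ₀ ∈ Ioc a b) :
    ∃ K, IsAsymKnead l F c j (𝓝[<] γ₀) K ∧ LeftAsym l F c a b j γ₀ K := by
  have hL := nhdsLT_le_nhdsWithin_Icc_diff hγ₀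
  obtain ⟨K, hK⟩ := exists_isAsymKnead hfam hmodal hnat j hL fun u hu => by
    obtain ⟨u', hu', hsub⟩ := mem_nhdsLT_iff_exists_Ioo_subset.1 hu
    exact ⟨Ioo u' γ₀, Ioo_mem_nhdsLT hu', hsub, isPreconnected_Ioo⟩
  exact ⟨K, hK,
    leftAsym_of_isAsymKnead hK (hL (mem_of_superset self_mem_nhdsWithin sdiff_subset))⟩

theorem exists_rightAsym (hfam : C1FamilyOn F a b)
    (hmodal : ∀ γ ∈ Icc a b, IsC1LModal l (F γ) (c γ)) (hnat : NaturalFamily l F c a b)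
    (j : Fin l) (hγ₀ : γ₀ ∈ Ico a b) :
    ∃ K, IsAsymKnead l F c j (𝓝[>] γ₀) K ∧ RightAsym l F c a b j γ₀ K := by
  have hL := nhdsGT_le_nhdsWithin_Icc_diff hγ₀
  obtain ⟨K, hK⟩ := exists_isAsymKnead hfam hmodal hnat j hL fun u hu => by
    obtain ⟨u', hu', hsub⟩ := mem_nhdsGT_iff_exists_Ioo_subset.1 hu
    exact ⟨Ioo γ₀ u', Ioo_mem_nhdsGT hu', hsub, isPreconnected_Ioo⟩
  exact ⟨K, hK,
    rightAsym_of_isAsymKnead hK (hL (mem_of_superset self_mem_nhdsWithin sdiff_subset))⟩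

end Asymptotic

theorem asymptotic_kneading_sequences_general
    (l : ℕ) (F : ℝ → ℝ → ℝ) (c : ℝ → Fin l → ℝ) (a b : ℝ)
    (hfam : C1FamilyOn F a b)
    (hmodal : ∀ γ ∈ Icc a b, IsC1LModal l (F γ) (c γ))
    (hnat : NaturalFamily l F c a b) (j : Fin l) :
    (∀ γ ∈ Ioc a b, ∃ Km : ℕ → Fin (l + 1), LeftAsym l F c a b j γ Km) ∧
    (∀ γ ∈ Ico a b, ∃ Kp : ℕ → Fin (l + 1), RightAsym l F c a b j γ Kp) ∧
    (∀ γ ∈ Ioo a b, (∀ m : ℕ, ∃ t : Fin (l + 1), kneadSym l F c γ j m = Sum.inl t) →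
      ∃ Km Kp : ℕ → Fin (l + 1),
        LeftAsym l F c a b j γ Km ∧ RightAsym l F c a b j γ Kp ∧
        ∀ m : ℕ, Sum.inl (Km m) = kneadSym l F c γ j m ∧
          Sum.inl (Kp m) = kneadSym l F c γ j m) ∧
    (∀ γ ∈ Icc a b, ∀ n : ℕ, ∀ S : Fin n → Fin (l + 1), ∀ i : Fin l,
      (∀ k : Fin n, kneadSym l F c γ j k = Sum.inl (S k)) →
      kneadSym l F c γ j n = Sum.inr i →
      (γ = a ∨ ∃ Km : ℕ → Fin (l + 1), LeftAsym l F c a b j γ Km ∧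
        (∀ k : Fin n, Km k = S k) ∧ (Km n = i.castSucc ∨ Km n = i.succ)) ∧
      (γ = b ∨ ∃ Kp : ℕ → Fin (l + 1), RightAsym l F c a b j γ Kp ∧
        (∀ k : Fin n, Kp k = S k) ∧ (Kp n = i.castSucc ∨ Kp n = i.succ))) := by
  have hleft (γ) (hγ : γ ∈ Ioc a b) := exists_leftAsym hfam hmodal hnat j hγ
  have hright (γ) (hγ : γ ∈ Ico a b) := exists_rightAsym hfam hmodal hnat j hγ
  have hLT (γ) (hγ : γ ∈ Ioc a b) : 𝓝[<] γ ≤ 𝓝[Icc a b] γ :=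
    (nhdsLT_le_nhdsWithin_Icc_diff hγ).trans (nhdsWithin_mono _ sdiff_subset)
  have hGT (γ) (hγ : γ ∈ Ico a b) : 𝓝[>] γ ≤ 𝓝[Icc a b] γ :=
    (nhdsGT_le_nhdsWithin_Icc_diff hγ).trans (nhdsWithin_mono _ sdiff_subset)
  refine ⟨fun γ hγ => (hleft γ hγ).imp fun _ => And.right,
    fun γ hγ => (hright γ hγ).imp fun _ => And.right, ?_, ?_⟩
  · intro γ hγ hinf
    have hγ' := Ioo_subset_Icc_self hγ
    obtain ⟨Km, hKm, hLm⟩ := hleft γ (Ioo_subset_Ioc_self hγ)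
    obtain ⟨Kp, hKp, hRp⟩ := hright γ (Ioo_subset_Ico_self hγ)
    refine ⟨Km, Kp, hLm, hRp, fun m => ?_⟩
    obtain ⟨t, ht⟩ := hinf m
    rw [ht, hKm.eq_of_kneadSym_eq_inl hfam hmodal hγ' (hLT γ (Ioo_subset_Ioc_self hγ)) ht,
      hKp.eq_of_kneadSym_eq_inl hfam hmodal hγ' (hGT γ (Ioo_subset_Ico_self hγ)) ht]
    exact ⟨rfl, rfl⟩
  · intro γ hγ n S i hS hcrit
    constructor
    · refine hγ.1.eq_or_lt.imp Eq.symm fun hγa => ?_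
      obtain ⟨K, hK, hLK⟩ := hleft γ ⟨hγa, hγ.2⟩
      have hL := hLT γ ⟨hγa, hγ.2⟩
      exact ⟨K, hLK, fun k => hK.eq_of_kneadSym_eq_inl hfam hmodal hγ hL (hS k),
        hK.adjacent_of_kneadSym_eq_inr hfam hmodal hγ hL hcrit⟩
    · refine hγ.2.eq_or_lt.imp id fun hγb => ?_
      obtain ⟨K, hK, hRK⟩ := hright γ ⟨hγ.1, hγb⟩
      have hL := hGT γ ⟨hγ.1, hγb⟩
      exact ⟨K, hRK, fun k => hK.eq_of_kneadSym_eq_inl hfam hmodal hγ hL (hS k),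
        hK.adjacent_of_kneadSym_eq_inr hfam hmodal hγ hL hcrit⟩

/-- In a natural family of `l`-modal maps all asymptotic kneading sequences exist; if
`K_j(γ)` is infinite they coincide with it, and if `K_j(γ) = S c_i` then both asymptotic
sequences start with `S` followed by a symbol in `{I_i, I_{i+1}}`. -/
theorem asymptotic_kneading_sequences
    (l : ℕ) (F : ℝ → ℝ → ℝ) (c : ℝ → Fin l → ℝ) (a b : ℝ) (hab : a < b)
    (hfam : C1FamilyOn F a b)
    (hmodal : ∀ γ ∈ Icc a b, IsC1LModal l (F γ) (c γ))
    (hnat : NaturalFamily l F c a b) (j : Fin l) :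
    (∀ γ ∈ Ioc a b, ∃ Km : ℕ → Fin (l + 1), LeftAsym l F c a b j γ Km) ∧
    (∀ γ ∈ Ico a b, ∃ Kp : ℕ → Fin (l + 1), RightAsym l F c a b j γ Kp) ∧
    (∀ γ ∈ Ioo a b, (∀ m : ℕ, ∃ t : Fin (l + 1), kneadSym l F c γ j m = Sum.inl t) →
      ∃ Km Kp : ℕ → Fin (l + 1),
        LeftAsym l F c a b j γ Km ∧ RightAsym l F c a b j γ Kp ∧
        ∀ m : ℕ, Sum.inl (Km m) = kneadSym l F c γ j m ∧
          Sum.inl (Kp m) = kneadSym l F c γ j m) ∧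
    (∀ γ ∈ Icc a b, ∀ n : ℕ, ∀ S : Fin n → Fin (l + 1), ∀ i : Fin l,
      (∀ k : Fin n, kneadSym l F c γ j k = Sum.inl (S k)) →
      kneadSym l F c γ j n = Sum.inr i →
      (γ = a ∨ ∃ Km : ℕ → Fin (l + 1), LeftAsym l F c a b j γ Km ∧
        (∀ k : Fin n, Km k = S k) ∧ (Km n = i.castSucc ∨ Km n = i.succ)) ∧
      (γ = b ∨ ∃ Kp : ℕ → Fin (l + 1), RightAsym l F c a b j γ Kp ∧
        (∀ k : Fin n, Kp k = S k) ∧ (Kp n = i.castSucc ∨ Kp n = i.succ))) :=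
  asymptotic_kneading_sequences_general l F c a b hfam hmodal hnat j
end
end
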